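/- Suppose $g - d + r = 1$ and set $\rho = g - r - 1 \geq 0$. Then in the sum $\frac{1}{\rho!}\sum_{|\gamma| = \rho} f^\gamma \cdot \prod_{i=1}^{r+1}(\gamma_i - i + 1)_{\gamma_i} \cdot f^{\lambda + \gamma}$ over partitions $\gamma$ of $\rho$ with at most $r+1$ parts, where $\lambda = (1^{r+1})$, every term with $\gamma_2 \geq 1$ vanishes (since $(\gamma_i - i + 1)_{\gamma_i} = 0$ for $i \geq 2$ and $\gamma_i \geq 1$), and the whole sum equals $\binom{r + \rho}{\rho}$. -/

import Mathlib

open Finset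

/-- Reciprocal factorial: `1/m!` for `m ≥ 0`, and `0` for `m < 0`. -/
noncomputable def rfac (m : ℤ) : ℚ :=
  if m < 0 then 0 else ((m.toNat).factorial : ℚ)⁻¹

/-- Falling factorial `(x)_k = x(x-1)⋯(x-k+1)` in `ℚ`. -/
noncomputable def ffac (x : ℚ) (k : ℕ) : ℚ := ∏ m ∈ Finset.range k, (x - m)

/-- The number of standard Young tableaux of shape `ν`, via the Aitken determinant
formula `f^ν = |ν|! · det(1/(ν_i + j - i)!)`. -/
noncomputable def fSYT {t : ℕ} (nu : Fin t → ℕ) : ℚ :=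
  ((∑ i, nu i).factorial : ℚ) *
    Matrix.det (fun i j : Fin t => rfac ((nu i : ℤ) + (j.val : ℤ) - (i.val : ℤ)))

/-!
If some row `i ≥ 1` (rows are 0-based) of the antitone `γ` is nonempty, then `γ₁ ≥ 1` and the
factor `(γ₁ - 1)_{γ₁} = (γ₁ - 1)(γ₁ - 2)⋯0` vanishes, so only the one-row shape `(ρ)`
contributes. For that shape Aitken's matrix is upper triangular with diagonal `1/ρ!, 1, …, 1`,
so `f^{(ρ)} = 1`, and the falling factorials contribute `ρ!`. For the hook `(ρ + 1, 1^r)` the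
first column of Aitken's matrix has only two nonzero entries; expanding along it expresses the
hook determinant through a column shape and a hook with one row fewer, and Pascal's rule closes
the induction: `f^{(ρ+1, 1^r)} = C(r + ρ, r)`.
-/

open Nat

lemma rfac_of_neg {m : ℤ} (h : m < 0) : rfac m = 0 := if_pos h

lemma rfac_natCast (n : ℕ) : rfac n = (n ! : ℚ)⁻¹ := by
  simp [rfac]

@[simp]
lemma ffac_zero (x : ℚ) : ffac x 0 = 1 := prod_range_zero _

lemma ffac_natCast (n k : ℕ) : ffac n k = n.descFactorial k := by
  rw [ffac, ← descPochhammer_eval_eq_prod_range, descPochhammer_eval_eq_descFactorial]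

lemma prod_ffac_eq_zero_of_antitone {n : ℕ} {ga : Fin n → ℕ} (hga : Antitone ga)
    (h : ∃ i : Fin n, 1 ≤ i.val ∧ 1 ≤ ga i) :
    ∏ i, ffac ((ga i : ℚ) - (i.val : ℚ)) (ga i) = 0 := by
  obtain ⟨i, hi, hgai⟩ := h
  let one : Fin n := ⟨1, by omega⟩
  have hone : 1 ≤ ga one := hgai.trans (hga (show one ≤ i from hi))
  refine prod_eq_zero (mem_univ one) ?_
  have hcast : (ga one : ℚ) - (one.val : ℚ) = ((ga one - 1 : ℕ) : ℚ) := by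
    rw [Nat.cast_sub hone]
  rw [hcast, ffac_natCast, Nat.descFactorial_eq_zero_iff_lt.mpr (by omega), Nat.cast_zero]

lemma exists_pos_of_ne_cons_zero {r rho : ℕ} {ga : Fin (r + 1) → ℕ} (hsum : ∑ i, ga i = rho)
    (hne : ga ≠ Fin.cons rho 0) : ∃ i : Fin (r + 1), 1 ≤ i.val ∧ 1 ≤ ga i := by
  contrapose! hne
  have htail (i : Fin r) : ga i.succ = 0 := by
    have := hne i.succ (Nat.le_add_left 1 i)
    omega
  rw [Fin.sum_univ_succ, sum_eq_zero (fun i _ => htail i), add_zero] at hsum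
  ext i
  cases i using Fin.cases <;> simp [hsum, htail]

lemma antitone_cons_zero (r rho : ℕ) : Antitone (Fin.cons rho 0 : Fin (r + 1) → ℕ) := by
  intro i j hij
  cases j using Fin.cases
  · rw [Fin.le_zero_iff.mp hij]
  · simp

lemma prod_ffac_cons_zero (r rho : ℕ) :
    ∏ i : Fin (r + 1), ffac (((Fin.cons rho 0 : Fin (r + 1) → ℕ) i : ℚ) - (i.val : ℚ))
      ((Fin.cons rho 0 : Fin (r + 1) → ℕ) i) = rho ! := by
  simp [Fin.prod_univ_succ, ffac_natCast, Nat.descFactorial_self]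

noncomputable def aitkenMatrix {t : ℕ} (nu : Fin t → ℕ) : Matrix (Fin t) (Fin t) ℚ :=
  Matrix.of fun i j => rfac ((nu i : ℤ) + (j.val : ℤ) - (i.val : ℤ))

@[simp]
lemma aitkenMatrix_apply {t : ℕ} (nu : Fin t → ℕ) (i j : Fin t) :
    aitkenMatrix nu i j = rfac ((nu i : ℤ) + (j.val : ℤ) - (i.val : ℤ)) := rfl

lemma fSYT_eq_factorial_mul_det {t : ℕ} (nu : Fin t → ℕ) :
    fSYT nu = ((∑ i, nu i)! : ℚ) * (aitkenMatrix nu).det := rfl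

lemma aitkenMatrix_cons_submatrix_succ {t : ℕ} (a : ℕ) (nu : Fin t → ℕ) :
    (aitkenMatrix (Fin.cons a nu : Fin (t + 1) → ℕ)).submatrix Fin.succ Fin.succ =
      aitkenMatrix nu := by
  ext i j
  simp only [Matrix.submatrix_apply, aitkenMatrix_apply, Fin.cons_succ, Fin.val_succ]
  congr 1; push_cast; ring

lemma aitkenMatrix_cons_cons_submatrix_succAbove_one {t : ℕ} (a b : ℕ) (nu : Fin t → ℕ) :
    (aitkenMatrix (Fin.cons a (Fin.cons b nu) : Fin (t + 2) → ℕ)).submatrix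
      (Fin.succAbove 1) Fin.succ = aitkenMatrix (Fin.cons (a + 1) nu) := by
  ext i j
  cases i using Fin.cases
  · simp only [Matrix.submatrix_apply, aitkenMatrix_apply, Fin.one_succAbove_zero, Fin.cons_zero,
      Fin.val_succ, Fin.val_zero]
    congr 1; push_cast; ring
  · simp only [Matrix.submatrix_apply, aitkenMatrix_apply, Fin.one_succAbove_succ, Fin.cons_succ,
      Fin.val_succ]
    congr 1; push_cast; ring

lemma det_aitkenMatrix_cons_zero (r rho : ℕ) :
    (aitkenMatrix (Fin.cons rho 0 : Fin (r + 1) → ℕ)).det = (rho ! : ℚ)⁻¹ := by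
  rw [Matrix.det_of_isUpperTriangular]
  · simp [Fin.prod_univ_succ, rfac]
  · intro i j hji
    cases i using Fin.cases with
    | zero => exact absurd hji (Fin.not_lt_zero _)
    | succ i =>
      apply rfac_of_neg
      simp only [Fin.cons_succ, Pi.zero_apply, Fin.val_succ]
      have hj : j.val < i.val + 1 := hji
      omega

lemma choose_div_factorial_add (a n : ℕ) :
    ((a + 1)! : ℚ)⁻¹ * ((n + 1)! : ℚ)⁻¹ - ((a + n + 1).choose n : ℚ) / ((a + n + 2)! : ℚ) =
      ((a + n + 1).choose (n + 1) : ℚ) / ((a + n + 2)! : ℚ) := by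
  have h := Nat.add_choose_mul_factorial_mul_factorial (a + 1) (n + 1)
  rw [show a + 1 + (n + 1) = a + n + 1 + 1 by omega, Nat.choose_succ_succ'] at h
  have hpos : 0 < (a + n + 1).choose n := Nat.choose_pos (by omega)
  rw [sub_eq_iff_eq_add, ← add_div, ← Nat.cast_inj (R := ℚ).mpr h]
  push_cast
  field_simp
  ring

lemma det_aitkenMatrix_hook (n a : ℕ) :
    (aitkenMatrix (Fin.cons (a + 1) 1 : Fin (n + 1) → ℕ)).det =
      ((a + n).choose n : ℚ) / ((a + n + 1)! : ℚ) := by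
  induction n generalizing a with
  | zero =>
    rw [Matrix.det_fin_one, aitkenMatrix_apply, Fin.cons_zero]
    simpa using rfac_natCast (a + 1)
  | succ n ih =>
    have hone : (1 : Fin (n + 1) → ℕ) = Fin.cons 1 1 := by
      ext i; cases i using Fin.cases <;> rfl
    have hcol (i : Fin n) : aitkenMatrix (Fin.cons (a + 1) (Fin.cons 1 1) : Fin (n + 2) → ℕ)
        i.succ.succ 0 = 0 := by
      apply rfac_of_neg
      simp only [Fin.cons_succ, Pi.one_apply, Fin.val_succ, Fin.val_zero]
      push_cast
      omega
    have hcolumn := ih 0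
    rw [zero_add, zero_add] at hcolumn
    rw [hone, Matrix.det_succ_column_zero, Fin.sum_univ_succ, Fin.sum_univ_succ,
      sum_eq_zero (fun i _ => by rw [hcol, mul_zero, zero_mul]), add_zero, Fin.succAbove_zero,
      Fin.succ_zero_eq_one, aitkenMatrix_cons_submatrix_succ,
      aitkenMatrix_cons_cons_submatrix_succAbove_one, hcolumn, ih (a + 1)]
    have hrow0 : rfac (((a + 1 : ℕ) : ℤ) + (0 : ℕ) - (0 : ℕ)) = ((a + 1)! : ℚ)⁻¹ := by
      simpa using rfac_natCast (a + 1)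
    have hrow1 : rfac (((1 : ℕ) : ℤ) + (0 : ℕ) - (1 : ℕ)) = 1 := by simpa using rfac_natCast 0
    simp only [aitkenMatrix_apply, Fin.cons_zero, Fin.cons_one, Fin.val_zero, Fin.val_one, hrow0,
      hrow1, Nat.choose_self]
    rw [show a + (n + 1) + 1 = a + n + 2 by ring, show a + 1 + n + 1 = a + n + 2 by ring,
      show a + 1 + n = a + n + 1 by ring, show a + (n + 1) = a + n + 1 by ring,
      ← choose_div_factorial_add]
    push_cast
    ring

lemma fSYT_cons_zero (r rho : ℕ) : fSYT (Fin.cons rho 0 : Fin (r + 1) → ℕ) = 1 := by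
  rw [fSYT_eq_factorial_mul_det, det_aitkenMatrix_cons_zero, Fin.sum_cons]
  simp only [Pi.zero_apply, sum_const_zero, add_zero]
  exact mul_inv_cancel₀ (by positivity)

lemma fSYT_hook (n a : ℕ) : fSYT (Fin.cons (a + 1) 1 : Fin (n + 1) → ℕ) = (a + n).choose n := by
  rw [fSYT_eq_factorial_mul_det, det_aitkenMatrix_hook, Fin.sum_cons]
  simp only [Pi.one_apply, sum_const, Finset.card_fin, smul_eq_mul, mul_one]
  rw [show a + 1 + n = a + n + 1 by ring]
  field_simp

theorem gdr_one_euler (r rho : ℕ) :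
    (∀ ga : Fin (r + 1) → ℕ, Antitone ga → ∑ i, ga i = rho →
      (∃ i : Fin (r + 1), 1 ≤ i.val ∧ 1 ≤ ga i) →
      ∏ i : Fin (r + 1), ffac ((ga i : ℚ) - (i.val : ℚ)) (ga i) = 0) ∧
    (1 / (rho.factorial : ℚ)) *
        ∑ ga ∈ (Finset.Nat.antidiagonalTuple (r + 1) rho).filter
            (fun ga => Antitone ga),
          fSYT ga * (∏ i : Fin (r + 1), ffac ((ga i : ℚ) - (i.val : ℚ)) (ga i)) *
            fSYT (fun i => 1 + ga i) =
      ((r + rho).choose rho : ℚ) := by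
  refine ⟨fun ga hga _ h => prod_ffac_eq_zero_of_antitone hga h, ?_⟩
  have hmem : (Fin.cons rho 0 : Fin (r + 1) → ℕ) ∈
      (Finset.Nat.antidiagonalTuple (r + 1) rho).filter (fun ga => Antitone ga) := by
    simp [Nat.mem_antidiagonalTuple, antitone_cons_zero]
  rw [sum_eq_single_of_mem _ hmem fun ga hga hne => ?_]
  · have hshape : (fun i => 1 + (Fin.cons rho 0 : Fin (r + 1) → ℕ) i) = Fin.cons (rho + 1) 1 := by
      ext i; cases i using Fin.cases <;> simp [add_comm]
    rw [fSYT_cons_zero, prod_ffac_cons_zero, hshape, fSYT_hook, add_comm r, Nat.choose_symm_add]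
    field_simp
  · rw [mem_filter, Nat.mem_antidiagonalTuple] at hga
    rw [prod_ffac_eq_zero_of_antitone hga.2 (exists_pos_of_ne_cons_zero hga.1 hne), mul_zero,
      zero_mul]
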